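/- For any full-support distribution π on a finite set, reference distribution π_ref with full support, real η, and response y, if ζ(y) = π_ref(y)·[π(y)]^{1−η}/C with normalizing constant C, then for responses y_w, y_l and any α: α·log(π(y_w)/ζ(y_w)) − α·log(π(y_l)/ζ(y_l)) = α·log(π(y_w)^η/π_ref(y_w)) − α·log(π(y_l)^η/π_ref(y_l)). -/

import Mathlib

/-- Entropy-controllable DPO's inner term is recovered from MI-DPO with the prior
`ζ ∝ π_ref · π^{1-η}`. -/
theorem centropy_inner_term
    {Y : Type*} [Fintype Y] (π πref : Y → ℝ) (ζ : Y → ℝ) (η α C : ℝ)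
    (hπ : ∀ y, 0 < π y) (hπsum : ∑ y, π y = 1)
    (href : ∀ y, 0 < πref y) (hC : 0 < C)
    (hζ : ∀ y, ζ y = πref y * (π y) ^ ((1 : ℝ) - η) / C)
    (yw yl : Y) :
    α * Real.log (π yw / ζ yw) - α * Real.log (π yl / ζ yl)
      = α * Real.log ((π yw) ^ η / πref yw) - α * Real.log ((π yl) ^ η / πref yl) := by
  have key : ∀ y, Real.log (π y / ζ y) = Real.log ((π y) ^ η / πref y) + Real.log C := by
    intro y
    have hπy := hπ y
    have hre := href y
    have hrp : (0:ℝ) < (π y) ^ ((1:ℝ) - η) := Real.rpow_pos_of_pos hπy _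
    have hηp : (0:ℝ) < (π y) ^ η := Real.rpow_pos_of_pos hπy _
    have h1 : (π y) ^ η * (π y) ^ ((1:ℝ) - η) = π y := by
      rw [← Real.rpow_add hπy]; norm_num
    have : π y / ζ y = (π y) ^ η / πref y * C := by
      rw [hζ y]
      field_simp
      linear_combination (-1 : ℝ) * h1
    rw [this, Real.log_mul (by positivity) (ne_of_gt hC)]
  rw [key yw, key yl]; ring
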